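/- arXiv:1310.2988 — 3 statements merged into one kernel-verified Lean document; each statement's English description precedes it below -/
import Mathlib

section
/- The assignment (a,b) ↦ b|_{A^σ} defines a group homomorphism ZQ(A,σ,Eˣ) → Hom(A^σ, Eˣ) which is trivial on the subgroup BQ(A,σ,Eˣ); hence it induces a group homomorphism Tr : HQ(A,σ,Eˣ) → Hom(A^σ, Eˣ) (the trace-of-Frobenius map on isomorphism classes of quasicharacter sheaves on an étale commutative group scheme). -/
/-! Basic setup: cocycle description of quasicharacter sheaves on étale
commutative group schemes, following the paper's stalk description. -/

section QCS

variable (A : Type) [AddCommGroup A] (M : Type) [CommGroup M]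

/-- The 2-cocycle condition for a function `a : A × A → M` (trivial action). -/
def IsCocycle (a : A → A → M) : Prop :=
  ∀ x y z : A, a (x + y) z * a x y = a x (y + z) * a y z

/-- The coboundary of a function `d : A → M`. -/
def cobound (d : A → M) : A → A → M :=
  fun x y => d (x + y) * (d x)⁻¹ * (d y)⁻¹

/-- The group of 2-cocycles `Z²(A,M)`. -/
def Z2 : Subgroup (A → A → M) where
  carrier := {a | IsCocycle A M a}
  one_mem' := by intro x y z; simp
  mul_mem' := by
    intro a b ha hb
    intro x y z
    simp only [Pi.mul_apply]
    rw [mul_mul_mul_comm, ha x y z, hb x y z, mul_mul_mul_comm]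
  inv_mem' := by
    intro a ha
    intro x y z
    simp only [Pi.inv_apply]
    rw [← mul_inv, ← mul_inv, ha x y z]

lemma mem_Z2_iff {a : A → A → M} : a ∈ Z2 A M ↔ IsCocycle A M a := Iff.rfl

/-- The coboundary map, as a homomorphism. -/
def coboundHom : (A → M) →* (A → A → M) where
  toFun := cobound A M
  map_one' := by funext x y; simp [cobound]
  map_mul' := by
    intro d e
    funext x y
    simp only [cobound, Pi.mul_apply, mul_inv]
    simp [mul_comm, mul_left_comm, mul_assoc]

/-- The group of 2-coboundaries `B²(A,M)`. -/
def B2 : Subgroup (A → A → M) := (coboundHom A M).range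

/-- The second cohomology group `H²(A,M)` (trivial action). -/
abbrev H2 : Type := Z2 A M ⧸ (B2 A M).subgroupOf (Z2 A M)

variable (σ : A ≃+ A)

/-- The compatibility condition between a 2-cocycle `a` and a 1-cochain `b`
relative to the automorphism `σ`. -/
def IsCompat (a : A → A → M) (b : A → M) : Prop :=
  ∀ x y : A, a (σ x) (σ y) * (a x y)⁻¹ = b (x + y) * (b x)⁻¹ * (b y)⁻¹

/-- The group `ZQ(A,σ,M)` of quasicharacter data. -/
def ZQ : Subgroup ((A → A → M) × (A → M)) where
  carrier := {p | IsCocycle A M p.1 ∧ IsCompat A M σ p.1 p.2}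
  one_mem' := ⟨fun x y z => by simp, fun x y => by simp⟩
  mul_mem' := by
    rintro p q ⟨hp1, hp2⟩ ⟨hq1, hq2⟩
    refine ⟨mul_mem (show p.1 ∈ Z2 A M from hp1) (show q.1 ∈ Z2 A M from hq1), ?_⟩
    intro x y
    have key : (p.1 (σ x) (σ y) * (p.1 x y)⁻¹) * (q.1 (σ x) (σ y) * (q.1 x y)⁻¹)
        = (p.2 (x + y) * (p.2 x)⁻¹ * (p.2 y)⁻¹) * (q.2 (x + y) * (q.2 x)⁻¹ * (q.2 y)⁻¹) := by
      rw [hp2 x y, hq2 x y]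
    simpa [Prod.fst_mul, Prod.snd_mul, Pi.mul_apply, mul_inv, mul_comm, mul_left_comm,
      mul_assoc] using key
  inv_mem' := by
    rintro p ⟨hp1, hp2⟩
    refine ⟨inv_mem (show p.1 ∈ Z2 A M from hp1), ?_⟩
    intro x y
    have key := congrArg (·⁻¹) (hp2 x y)
    simpa [Prod.fst_inv, Prod.snd_inv, Pi.inv_apply, mul_inv, mul_comm, mul_left_comm,
      mul_assoc] using key

lemma mem_ZQ_iff {p : (A → A → M) × (A → M)} :
    p ∈ ZQ A M σ ↔ IsCocycle A M p.1 ∧ IsCompat A M σ p.1 p.2 := Iff.rfl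

/-- The map `d ↦ (x ↦ d(σ x)·d(x)⁻¹)`, as a homomorphism. -/
def sigmaDiff : (A → M) →* (A → M) where
  toFun d := fun x => d (σ x) * (d x)⁻¹
  map_one' := by funext x; simp
  map_mul' := by
    intro d e
    funext x
    simp only [Pi.mul_apply, mul_inv]
    simp [mul_comm, mul_left_comm, mul_assoc]

/-- The subgroup `BQ(A,σ,M)` of coboundary quasicharacter data. -/
def BQ : Subgroup ((A → A → M) × (A → M)) :=
  ((coboundHom A M).prod (sigmaDiff A M σ)).range

/-- `HQ(A,σ,M)`: the group of quasicharacter data modulo coboundaries. -/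
abbrev HQ : Type := ZQ A M σ ⧸ (BQ A M σ).subgroupOf (ZQ A M σ)

/-- The subgroup `A^σ` of fixed points of `σ`. -/
def fixedAdd : AddSubgroup A where
  carrier := {x | σ x = x}
  zero_mem' := by simp
  add_mem' := by
    intro a b ha hb
    simp only [Set.mem_setOf_eq] at *
    rw [map_add, ha, hb]
  neg_mem' := by
    intro a ha
    simp only [Set.mem_setOf_eq] at *
    rw [map_neg, ha]

/-- The restriction of the 1-cochain part of a quasicharacter datum to `A^σ`,
as a character of `A^σ`. -/
def trZ (p : ZQ A M σ) : AddChar (fixedAdd A σ) M where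
  toFun := fun x => (p : (A → A → M) × (A → M)).2 (x : A)
  map_zero_eq_one' := by
    have h := p.prop.2 (0 : A) 0
    simp at h
    simpa using h
  map_add_eq_mul' := by
    rintro ⟨x, hx⟩ ⟨y, hy⟩
    have hx' : σ x = x := hx
    have hy' : σ y = y := hy
    have h := p.prop.2 x y
    rw [hx', hy', mul_inv_cancel] at h
    have h2 : (p : (A → A → M) × (A → M)).2 (x + y)
        * ((p : (A → A → M) × (A → M)).2 x)⁻¹
        * ((p : (A → A → M) × (A → M)).2 y)⁻¹ = 1 := h.symm
    rw [mul_inv_eq_one] at h2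
    rw [mul_inv_eq_iff_eq_mul] at h2
    simpa [mul_comm] using h2

/-- The trace map `ZQ(A,σ,M) → Hom(A^σ, M)`, `(a,b) ↦ b|_{A^σ}`. -/
def trZHom : ZQ A M σ →* AddChar (fixedAdd A σ) M where
  toFun := trZ A M σ
  map_one' := by
    apply AddChar.ext
    intro x
    rfl
  map_mul' := by
    intro p q
    apply AddChar.ext
    intro x
    rfl

lemma trZHom_trivial_on_BQ :
    (BQ A M σ).subgroupOf (ZQ A M σ) ≤ (trZHom A M σ).ker := by
  rintro ⟨p, hpZ⟩ hpB
  obtain ⟨d, hd⟩ := hpB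
  have hd' : ((coboundHom A M).prod (sigmaDiff A M σ)) d = p := hd
  have hd2 : p.2 = fun x => d (σ x) * (d x)⁻¹ := by rw [← hd']; rfl
  apply AddChar.ext
  rintro ⟨x, hx⟩
  have hx' : σ x = x := hx
  show trZ A M σ ⟨p, hpZ⟩ _ = 1
  simp [trZ, hd2, hx']

/-- The trace-of-Frobenius homomorphism `Tr : HQ(A,σ,M) → Hom(A^σ,M)`. -/
def TrHom : HQ A M σ →* AddChar (fixedAdd A σ) M :=
  QuotientGroup.lift _ (trZHom A M σ) (trZHom_trivial_on_BQ A M σ)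

/-- The projection `ZQ(A,σ,M) → Z²(A,M)`, `(a,b) ↦ a`. -/
def zproj : ZQ A M σ →* Z2 A M where
  toFun := fun p => ⟨(p : (A → A → M) × (A → M)).1, p.prop.1⟩
  map_one' := rfl
  map_mul' := fun _ _ => rfl

lemma zproj_trivial_on_BQ :
    (BQ A M σ).subgroupOf (ZQ A M σ) ≤
      ((QuotientGroup.mk' ((B2 A M).subgroupOf (Z2 A M))).comp (zproj A M σ)).ker := by
  rintro ⟨p, hpZ⟩ hpB
  obtain ⟨d, hd⟩ := hpB
  have hd' : ((coboundHom A M).prod (sigmaDiff A M σ)) d = p := hd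
  have hd1 : p.1 = cobound A M d := by rw [← hd']; rfl
  simp only [MonoidHom.mem_ker, MonoidHom.comp_apply]
  rw [QuotientGroup.mk'_apply, QuotientGroup.eq_one_iff]
  show (zproj A M σ ⟨p, hpZ⟩ : A → A → M) ∈ B2 A M
  exact ⟨d, hd1.symm⟩

/-- The map `HQ(A,σ,M) → H²(A,M)` sending `[(a,b)]` to `[a]`. -/
def clsHom : HQ A M σ →* H2 A M :=
  QuotientGroup.lift _ ((QuotientGroup.mk' ((B2 A M).subgroupOf (Z2 A M))).comp (zproj A M σ))
    (zproj_trivial_on_BQ A M σ)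

/-- Precomposition with `σ × σ` on 2-cocycles. -/
def precompZ2 : Z2 A M →* Z2 A M where
  toFun := fun a => ⟨fun x y => (a : A → A → M) (σ x) (σ y), by
    intro x y z
    have := a.prop (σ x) (σ y) (σ z)
    simpa [map_add] using this⟩
  map_one' := rfl
  map_mul' := fun _ _ => rfl

lemma precompZ2_trivial : ((B2 A M).subgroupOf (Z2 A M)) ≤
    (((QuotientGroup.mk' ((B2 A M).subgroupOf (Z2 A M))).comp (precompZ2 A M σ))).ker := by
  rintro ⟨a, haZ⟩ haB
  obtain ⟨d, hd⟩ := haB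
  simp only [MonoidHom.mem_ker, MonoidHom.comp_apply]
  rw [QuotientGroup.mk'_apply, QuotientGroup.eq_one_iff]
  show (precompZ2 A M σ ⟨a, haZ⟩ : A → A → M) ∈ B2 A M
  refine ⟨fun x => d (σ x), ?_⟩
  have hd1 : a = cobound A M d := hd.symm
  funext x y
  show cobound A M (fun x => d (σ x)) x y = a (σ x) (σ y)
  rw [hd1]
  simp [cobound, map_add]

/-- The action of `σ` on `H²(A,M)`, `[a] ↦ [a ∘ (σ × σ)]`. -/
def H2act : H2 A M →* H2 A M :=
  QuotientGroup.lift _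
    ((QuotientGroup.mk' ((B2 A M).subgroupOf (Z2 A M))).comp (precompZ2 A M σ))
    (precompZ2_trivial A M σ)

/-- The subgroup `H²(A,M)^σ` of `σ`-fixed classes. -/
def H2fixed : Subgroup (H2 A M) where
  carrier := {c | H2act A M σ c = c}
  one_mem' := map_one _
  mul_mem' := by
    intro a b ha hb
    simp only [Set.mem_setOf_eq] at *
    rw [map_mul, ha, hb]
  inv_mem' := by
    intro a ha
    simp only [Set.mem_setOf_eq] at *
    rw [map_inv, ha]

end QCS

/-- The assignment `(a,b) ↦ b|_{A^σ}` defines a group homomorphism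
`ZQ(A,σ,Eˣ) → Hom(A^σ, Eˣ)` which is trivial on `BQ(A,σ,Eˣ)`; hence it induces a group
homomorphism `Tr : HQ(A,σ,Eˣ) → Hom(A^σ, Eˣ)`, the trace-of-Frobenius map. -/
theorem trace_of_frobenius_induced_on_HQ
    (E : Type) [Field E] [IsAlgClosed E] [CharZero E]
    (A : Type) [AddCommGroup A] (σ : A ≃+ A) :
    ∃ T : ZQ A Eˣ σ →* AddChar (fixedAdd A σ) Eˣ,
      (∀ (p : ZQ A Eˣ σ) (x : fixedAdd A σ),
          T p x = (p : (A → A → Eˣ) × (A → Eˣ)).2 (x : A)) ∧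
      (∀ p : ZQ A Eˣ σ, (p : (A → A → Eˣ) × (A → Eˣ)) ∈ BQ A Eˣ σ → T p = 1) ∧
      ∃ Tr : HQ A Eˣ σ →* AddChar (fixedAdd A σ) Eˣ,
        ∀ p : ZQ A Eˣ σ, Tr (QuotientGroup.mk p) = T p := by
  refine ⟨trZHom A Eˣ σ, fun p x => rfl, ?_, TrHom A Eˣ σ, fun p => rfl⟩
  intro p hp
  exact trZHom_trivial_on_BQ A Eˣ σ (show p ∈ (BQ A Eˣ σ).subgroupOf (ZQ A Eˣ σ) from hp)
end

section
/- The trace-of-Frobenius homomorphism Tr : HQ(A,σ,Eˣ) → Hom(A^σ, Eˣ), induced by (a,b) ↦ b|_{A^σ}, is surjective and split: there exists a group homomorphism s : Hom(A^σ, Eˣ) → HQ(A,σ,Eˣ) with Tr ∘ s = id. (This is Proposition 3.6 of the paper, the surjectivity and splitness of the trace of Frobenius for quasicharacter sheaves on étale commutative group schemes, in the stalk/cocycle model.) -/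
section Aux

open QuotientAddGroup in
/-- `Additive Eˣ` satisfies Baer's criterion when `E` is algebraically closed. -/
theorem baer_units (E : Type) [Field E] [IsAlgClosed E] :
    Module.Baer ℤ (Additive Eˣ) := by
  haveI : RootableBy Eˣ ℕ := rootableByOfPowLeftSurj _ _ (fun {n} hn u => by
    obtain ⟨z, hz⟩ := IsAlgClosed.exists_pow_nat_eq (u : E) (Nat.pos_of_ne_zero hn)
    have hz0 : z ≠ 0 := by
      intro h
      rw [h, zero_pow hn] at hz
      exact u.ne_zero hz.symm
    refine ⟨Units.mk0 z hz0, ?_⟩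
    ext
    push_cast
    exact hz)
  haveI : RootableBy Eˣ ℤ := Group.rootableByIntOfRootableByNat Eˣ
  haveI : DivisibleBy (Additive Eˣ) ℤ :=
    { div := fun a n => Additive.ofMul (RootableBy.root a.toMul n)
      div_zero := fun a => congrArg Additive.ofMul (RootableBy.root_zero _)
      div_cancel := fun {n} a hn => by
        show Additive.ofMul (RootableBy.root a.toMul n ^ n) = a
        rw [RootableBy.root_cancel _ hn]
        rfl }
  exact Module.Baer.of_divisible _

/-- Any additive character on a subgroup extends, since `Additive Eˣ` is divisible. -/
theorem exists_extension (E : Type) [Field E] [IsAlgClosed E] {A : Type} [AddCommGroup A]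
    (B : AddSubgroup A) (f : B →+ Additive Eˣ) :
    ∃ g : A →+ Additive Eˣ, ∀ x : B, g (x : A) = f x := by
  obtain ⟨g, hg⟩ := (baer_units E).extension_property_addMonoidHom B.subtype
    B.subtype_injective f
  exact ⟨g, fun x => DFunLike.congr_fun hg x⟩

/-- A hom vanishing on the kernel of `φ` factors through `φ`. -/
theorem exists_factor (E : Type) [Field E] [IsAlgClosed E] {A : Type} [AddCommGroup A]
    (φ : A →+ A) (c : A →+ Additive Eˣ) (hc : ∀ x : A, φ x = 0 → c x = 0) :
    ∃ d : A →+ Additive Eˣ, ∀ x : A, d (φ x) = c x := by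
  let e := QuotientAddGroup.quotientKerEquivRange φ
  let l : A ⧸ φ.ker →+ Additive Eˣ :=
    QuotientAddGroup.lift φ.ker c (fun x hx => hc x hx)
  let cbar : φ.range →+ Additive Eˣ := l.comp e.symm.toAddMonoidHom
  obtain ⟨d, hd⟩ := exists_extension E φ.range cbar
  refine ⟨d, fun x => ?_⟩
  have hmem : φ x ∈ φ.range := ⟨x, rfl⟩
  have h1 : e (QuotientAddGroup.mk x) = ⟨φ x, hmem⟩ := rfl
  have h2 : e.symm ⟨φ x, hmem⟩ = QuotientAddGroup.mk x := by
    rw [AddEquiv.symm_apply_eq]; exact h1.symm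
  have h3 : d (φ x) = cbar ⟨φ x, hmem⟩ := hd ⟨φ x, hmem⟩
  rw [h3]
  show l (e.symm ⟨φ x, hmem⟩) = c x
  rw [h2]
  rfl

/-- A character of `A` that is trivial on `A^σ` gives a coboundary quasicharacter datum. -/
theorem pair_mem_BQ (E : Type) [Field E] [IsAlgClosed E] {A : Type} [AddCommGroup A]
    (σ : A ≃+ A) (c : A →+ Additive Eˣ) (hc : ∀ x : A, σ x = x → c x = 0) :
    ((1 : A → A → Eˣ), fun x => (c x).toMul) ∈ BQ A Eˣ σ := by
  set φ : A →+ A := σ.toAddMonoidHom - AddMonoidHom.id A with hφ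
  have hφx : ∀ x : A, φ x = σ x - x := fun x => rfl
  obtain ⟨d, hd⟩ := exists_factor E φ c (fun x hx => by
    apply hc
    have := hφx x
    rw [hx] at this
    exact (sub_eq_zero.mp this.symm))
  refine ⟨fun x => (d x).toMul, ?_⟩
  have : ((coboundHom A Eˣ).prod (sigmaDiff A Eˣ σ)) (fun x => (d x).toMul)
      = (cobound A Eˣ (fun x => (d x).toMul), fun x => (d (σ x)).toMul * ((d x).toMul)⁻¹) := rfl
  rw [this]
  refine Prod.ext ?_ ?_
  · funext x y
    show (d (x + y)).toMul * ((d x).toMul)⁻¹ * ((d y).toMul)⁻¹ = 1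
    rw [map_add]
    simp [mul_comm, mul_left_comm]
  · funext x
    show (d (σ x)).toMul * ((d x).toMul)⁻¹ = (c x).toMul
    have := hd x
    rw [hφx x, map_sub] at this
    rw [← this]
    simp [div_eq_mul_inv]

end Aux

/-- The trace-of-Frobenius homomorphism
`Tr : HQ(A,σ,Eˣ) → Hom(A^σ, Eˣ)` is surjective and split. -/
theorem trace_of_frobenius_surjective_and_split
    (E : Type) [Field E] [IsAlgClosed E] [CharZero E]
    (A : Type) [AddCommGroup A] (σ : A ≃+ A) :
    Function.Surjective (TrHom A Eˣ σ) ∧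
    ∃ s : AddChar (fixedAdd A σ) Eˣ →* HQ A Eˣ σ,
      (TrHom A Eˣ σ).comp s = MonoidHom.id (AddChar (fixedAdd A σ) Eˣ) := by
  classical
  -- choose extensions of characters of `A^σ` to characters of `A`
  have ext : ∀ χ : AddChar (fixedAdd A σ) Eˣ,
      ∃ g : A →+ Additive Eˣ, ∀ x : fixedAdd A σ, g (x : A) = Additive.ofMul (χ x) := by
    intro χ
    obtain ⟨g, hg⟩ := exists_extension E (fixedAdd A σ) χ.toAddMonoidHom
    exact ⟨g, fun x => by rw [hg x]; rfl⟩
  choose g hg using ext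
  -- the associated quasicharacter data
  have hmem : ∀ χ : AddChar (fixedAdd A σ) Eˣ,
      (((1 : A → A → Eˣ), fun x => (g χ x).toMul) : (A → A → Eˣ) × (A → Eˣ)) ∈ ZQ A Eˣ σ := by
    intro χ
    constructor
    · intro x y z; simp
    · intro x y
      show (1 : Eˣ) * (1 : Eˣ)⁻¹ = (g χ (x + y)).toMul * ((g χ x).toMul)⁻¹ * ((g χ y).toMul)⁻¹
      rw [map_add]
      simp [mul_comm, mul_left_comm]
  let sZ : AddChar (fixedAdd A σ) Eˣ → ZQ A Eˣ σ := fun χ => ⟨_, hmem χ⟩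
  let sfun : AddChar (fixedAdd A σ) Eˣ → HQ A Eˣ σ := fun χ => QuotientGroup.mk (sZ χ)
  -- multiplicativity
  have hone : sfun 1 = 1 := by
    show QuotientGroup.mk (sZ 1) = QuotientGroup.mk (1 : ZQ A Eˣ σ)
    rw [QuotientGroup.eq]
    rw [Subgroup.mem_subgroupOf]
    have h1 : (((sZ 1)⁻¹ * 1 : ZQ A Eˣ σ) : (A → A → Eˣ) × (A → Eˣ))
        = ((1 : A → A → Eˣ), fun x => ((- g 1) x).toMul) := by
      refine Prod.ext ?_ ?_
      · funext x y; show ((1 : Eˣ))⁻¹ * 1 = 1; simp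
      · funext x
        show ((g 1 x).toMul)⁻¹ * 1 = ((- g 1) x).toMul
        simp
    rw [h1]
    refine pair_mem_BQ E σ (- g 1) (fun x hx => ?_)
    have := hg 1 ⟨x, hx⟩
    simp only [AddChar.one_apply] at this
    simp [this]
  have hmul : ∀ χ ψ : AddChar (fixedAdd A σ) Eˣ, sfun (χ * ψ) = sfun χ * sfun ψ := by
    intro χ ψ
    show QuotientGroup.mk (sZ (χ * ψ)) = QuotientGroup.mk (sZ χ * sZ ψ)
    rw [QuotientGroup.eq]
    rw [Subgroup.mem_subgroupOf]
    set c : A →+ Additive Eˣ := g χ + g ψ - g (χ * ψ) with hc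
    have h1 : (((sZ (χ * ψ))⁻¹ * (sZ χ * sZ ψ) : ZQ A Eˣ σ) : (A → A → Eˣ) × (A → Eˣ))
        = ((1 : A → A → Eˣ), fun x => (c x).toMul) := by
      refine Prod.ext ?_ ?_
      · funext x y; show ((1 : Eˣ))⁻¹ * (1 * 1) = 1; simp
      · funext x
        show ((g (χ * ψ) x).toMul)⁻¹ * ((g χ x).toMul * (g ψ x).toMul)
            = (c x).toMul
        rw [hc]
        simp [sub_eq_add_neg, mul_comm, mul_left_comm, div_eq_mul_inv]
    rw [h1]
    refine pair_mem_BQ E σ c (fun x hx => ?_)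
    have h2 := hg χ ⟨x, hx⟩
    have h3 := hg ψ ⟨x, hx⟩
    have h4 := hg (χ * ψ) ⟨x, hx⟩
    rw [hc]
    simp only [AddMonoidHom.sub_apply, AddMonoidHom.add_apply, h2, h3, h4,
      AddChar.mul_apply]
    rw [sub_eq_zero]
    rfl
  let s : AddChar (fixedAdd A σ) Eˣ →* HQ A Eˣ σ :=
    { toFun := sfun, map_one' := hone, map_mul' := hmul }
  have hsec : (TrHom A Eˣ σ).comp s = MonoidHom.id (AddChar (fixedAdd A σ) Eˣ) := by
    apply MonoidHom.ext
    intro χ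
    show TrHom A Eˣ σ (QuotientGroup.mk (sZ χ)) = χ
    have h5 : TrHom A Eˣ σ (QuotientGroup.mk (sZ χ)) = trZHom A Eˣ σ (sZ χ) := rfl
    rw [h5]
    apply AddChar.ext
    intro x
    show (g χ (x : A)).toMul = χ x
    rw [hg χ x]
    rfl
  refine ⟨fun χ => ⟨s χ, ?_⟩, s, hsec⟩
  exact DFunLike.congr_fun hsec χ
end

section
/- The map sending a class [(a,b)] ∈ HQ(A,σ,Eˣ) to the cohomology class [a] ∈ H²(A,Eˣ) restricts to a group isomorphism from the kernel of the trace-of-Frobenius homomorphism Tr : HQ(A,σ,Eˣ) → Hom(A^σ, Eˣ) onto H²(A,Eˣ)^σ. (This computes the kernel of the trace of Frobenius for quasicharacter sheaves on étale commutative group schemes, as in Proposition 3.7 and Theorem 3.9 of the paper, in the stalk/cocycle model.) -/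
/-!
A class `[(a, b)]` lies in the kernel of the trace exactly when `b` can be chosen trivial on
`A^σ`. The only input beyond bookkeeping is that `Eˣ` is divisible, i.e. an injective
`ℤ`-module, so characters extend along injections and factor through any homomorphism whose
kernel they kill.

Injectivity: if `a = ∂d`, then `b / (σ^*d / d)` is a character of `A` trivial on
`A^σ = ker (σ - 1)`, hence equal to `g ∘ (σ - 1)` for a character `g`, and `(a, b)` is the
coboundary of `d g`. Surjectivity: if `[a]` is `σ`-fixed, then `a ∘ (σ × σ) / a = ∂d` for
some `d`, which is a character on `A^σ`; extending it to a character `χ` of `A`, the datum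
`(a, d / χ)` has trivial trace.
-/

theorem IsAlgClosed.zpow_surjective_units (E : Type*) [Field E] [IsAlgClosed E] {n : ℤ}
    (hn : n ≠ 0) : Function.Surjective fun u : Eˣ => u ^ n := by
  intro u
  obtain ⟨z, hz⟩ := IsAlgClosed.exists_pow_nat_eq (u : E) (Int.natAbs_pos.2 hn)
  have hz0 : z ≠ 0 := by
    rintro rfl
    exact u.ne_zero (hz ▸ zero_pow (Int.natAbs_ne_zero.2 hn))
  have hw : Units.mk0 z hz0 ^ n.natAbs = u := Units.ext (by simpa using hz)
  rcases Int.natAbs_eq n with hn' | hn'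
  · refine ⟨Units.mk0 z hz0, ?_⟩
    simp only
    rw [hn', zpow_natCast, hw]
  · refine ⟨(Units.mk0 z hz0)⁻¹, ?_⟩
    simp only
    rw [hn', inv_zpow', neg_neg, zpow_natCast, hw]

noncomputable instance IsAlgClosed.divisibleByIntAdditiveUnits (E : Type*) [Field E]
    [IsAlgClosed E] : DivisibleBy (Additive Eˣ) ℤ :=
  divisibleByOfSMulRightSurj _ _ fun hn a =>
    let ⟨u, hu⟩ := IsAlgClosed.zpow_surjective_units E hn a.toMul
    ⟨Additive.ofMul u, by simp only [← ofMul_zpow, hu, ofMul_toMul]⟩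

namespace AddChar

variable {A B M : Type*} [AddCommGroup A] [AddCommGroup B] [CommGroup M]

def ofMapAddEqMul (f : A → M) (hf : ∀ x y, f (x + y) = f x * f y) : AddChar A M where
  toFun := f
  map_zero_eq_one' := by
    have h := hf 0 0
    rwa [add_zero, left_eq_mul] at h
  map_add_eq_mul' := hf

@[simp]
theorem ofMapAddEqMul_apply (f : A → M) (hf : ∀ x y, f (x + y) = f x * f y) (x : A) :
    ofMapAddEqMul f hf x = f x := rfl

theorem exists_comp_eq_of_ker_le [DivisibleBy (Additive M) ℤ] (ψ : A →+ B) (χ : AddChar A M)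
    (hχ : ∀ x, ψ x = 0 → χ x = 1) : ∃ g : AddChar B M, ∀ x, g (ψ x) = χ x := by
  have hker : ψ.ker ≤ (toAddMonoidHomEquiv χ).ker := fun x hx => by
    simp [hχ x hx]
  obtain ⟨g, hg⟩ := (Module.Baer.of_divisible _).extension_property_addMonoidHom
    (QuotientAddGroup.kerLift ψ) (QuotientAddGroup.kerLift_injective ψ)
    (QuotientAddGroup.lift ψ.ker _ hker)
  exact ⟨toAddMonoidHomEquiv.symm g, fun x =>
    congrArg Additive.toMul (DFunLike.congr_fun hg (x : A ⧸ ψ.ker))⟩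

end AddChar

section Cochains

variable {A : Type} [AddCommGroup A] {M : Type} [CommGroup M] {σ : A ≃+ A}

theorem cobound_apply_eq_one_iff {d : A → M} {x y : A} :
    cobound A M d x y = 1 ↔ d (x + y) = d x * d y := by
  rw [cobound, mul_assoc, ← mul_inv, mul_inv_eq_one]

theorem cobound_addChar (χ : AddChar A M) : cobound A M χ = 1 := by
  funext x y
  exact cobound_apply_eq_one_iff.2 (χ.map_add_eq_mul x y)

theorem sigmaDiff_addChar (χ : AddChar A M) (x : A) :
    sigmaDiff A M σ χ x = χ (σ x - x) := by
  rw [χ.map_sub_eq_div, div_eq_mul_inv]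
  rfl

theorem isCompat_cobound_sigmaDiff (d : A → M) :
    IsCompat A M σ (cobound A M d) (sigmaDiff A M σ d) := by
  intro x y
  simp only [cobound, sigmaDiff, MonoidHom.coe_mk, OneHom.coe_mk, map_add]
  apply Additive.ofMul.injective
  simp only [ofMul_mul, ofMul_inv]
  abel

theorem IsCompat.cobound_eq {a : A → A → M} {b b' : A → M} (hb : IsCompat A M σ a b)
    (hb' : IsCompat A M σ a b') : cobound A M b = cobound A M b' := by
  funext x y
  exact (hb x y).symm.trans (hb' x y)

theorem IsCompat.cobound_apply_eq_one {a : A → A → M} {b : A → M} (hb : IsCompat A M σ a b)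
    {x y : A} (hx : σ x = x) (hy : σ y = y) : cobound A M b x y = 1 := by
  rw [cobound, ← hb x y, hx, hy, mul_inv_cancel]

theorem mem_BQ_iff {p : (A → A → M) × (A → M)} :
    p ∈ BQ A M σ ↔ ∃ d, cobound A M d = p.1 ∧ sigmaDiff A M σ d = p.2 := by
  simp only [BQ, MonoidHom.mem_range, Prod.ext_iff]
  rfl

variable [DivisibleBy (Additive M) ℤ]

theorem cobound_mem_BQ_of_isCompat {d b : A → M} (hb : IsCompat A M σ (cobound A M d) b)
    (hfix : ∀ x, σ x = x → b x = 1) : (cobound A M d, b) ∈ BQ A M σ := by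
  have hdiv : cobound A M (b / sigmaDiff A M σ d) = 1 := by
    change coboundHom A M _ = 1
    rw [map_div, div_eq_one]
    exact hb.cobound_eq (isCompat_cobound_sigmaDiff d)
  let χ := AddChar.ofMapAddEqMul (b / sigmaDiff A M σ d) fun x y =>
    cobound_apply_eq_one_iff.1 (congrFun₂ hdiv x y)
  obtain ⟨g, hg⟩ := χ.exists_comp_eq_of_ker_le ((σ : A →+ A) - AddMonoidHom.id A)
    fun x hx => by
      have hx : σ x = x := sub_eq_zero.1 hx
      simp [χ, sigmaDiff, hx, hfix x hx]
  refine mem_BQ_iff.2 ⟨g * d, ?_, ?_⟩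
  · change coboundHom A M _ = _
    rw [map_mul]
    exact (congrArg (· * cobound A M d) (cobound_addChar g)).trans (one_mul _)
  · rw [map_mul]
    funext x
    have hgx : g (σ x - x) = b x / sigmaDiff A M σ d x := hg x
    rw [Pi.mul_apply, sigmaDiff_addChar, hgx, div_mul_cancel]

theorem IsCompat.exists_eq_one_of_fixed {a : A → A → M} {d : A → M}
    (hd : IsCompat A M σ a d) : ∃ b, IsCompat A M σ a b ∧ ∀ x, σ x = x → b x = 1 := by
  let χ₀ : AddChar (fixedAdd A σ) M := AddChar.ofMapAddEqMul (fun x => d x) fun x y =>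
    cobound_apply_eq_one_iff.1 (hd.cobound_apply_eq_one x.2 y.2)
  obtain ⟨χ, hχ⟩ := χ₀.exists_comp_eq_of_ker_le (fixedAdd A σ).subtype fun x hx => by
    simp [show x = 0 from Subtype.ext hx]
  have hcob : cobound A M (d / χ) = cobound A M d := by
    change coboundHom A M _ = _
    rw [map_div]
    exact (congrArg (cobound A M d / ·) (cobound_addChar χ)).trans (div_one _)
  refine ⟨d / χ, fun x y => ?_, fun x hx => ?_⟩
  · exact (hd x y).trans (congrFun₂ hcob x y).symm
  · simpa [div_eq_one, χ₀] using (hχ ⟨x, hx⟩).symm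

end Cochains

section Classes

variable {A : Type} [AddCommGroup A] {M : Type} [CommGroup M] {σ : A ≃+ A}

theorem mk_mem_H2fixed_iff (q : Z2 A M) :
    (q : H2 A M) ∈ H2fixed A M σ ↔ ∃ b, IsCompat A M σ q b := by
  change QuotientGroup.mk (precompZ2 A M σ q) = (q : H2 A M) ↔ _
  rw [QuotientGroup.eq_iff_div_mem, Subgroup.mem_subgroupOf]
  simp only [B2, MonoidHom.mem_range, funext_iff, div_eq_mul_inv]
  exact exists_congr fun b => forall₂_congr fun x y => eq_comm

theorem clsHom_mem_H2fixed (c : HQ A M σ) : clsHom A M σ c ∈ H2fixed A M σ := by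
  induction c using QuotientGroup.induction_on with
  | H p => exact (mk_mem_H2fixed_iff (zproj A M σ p)).2 ⟨_, p.2.2⟩

theorem mk_mem_ker_TrHom_iff (p : ZQ A M σ) :
    (p : HQ A M σ) ∈ (TrHom A M σ).ker ↔
      ∀ x, σ x = x → (p : (A → A → M) × (A → M)).2 x = 1 := by
  rw [MonoidHom.mem_ker, AddChar.eq_one_iff, Subtype.forall]
  rfl

def kerTrHomToH2fixed : (TrHom A M σ).ker →* H2fixed A M σ :=
  ((clsHom A M σ).comp (TrHom A M σ).ker.subtype).codRestrict _ fun c => clsHom_mem_H2fixed c.1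

variable [DivisibleBy (Additive M) ℤ]

theorem kerTrHomToH2fixed_injective :
    Function.Injective (kerTrHomToH2fixed (σ := σ) (M := M)) := by
  refine (injective_iff_map_eq_one _).2 fun ⟨c, hc⟩ hone => ?_
  induction c using QuotientGroup.induction_on with
  | H p =>
    obtain ⟨⟨a, b⟩, _, hab⟩ := p
    have hB2 : a ∈ B2 A M := by
      have h := congrArg Subtype.val hone
      exact Subgroup.mem_subgroupOf.1 ((QuotientGroup.eq_one_iff _).1 h)
    obtain ⟨d, rfl⟩ := hB2
    have hBQ := cobound_mem_BQ_of_isCompat hab ((mk_mem_ker_TrHom_iff _).1 hc)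
    exact Subtype.ext ((QuotientGroup.eq_one_iff _).2 (Subgroup.mem_subgroupOf.2 hBQ))

theorem kerTrHomToH2fixed_surjective :
    Function.Surjective (kerTrHomToH2fixed (σ := σ) (M := M)) := by
  rintro ⟨c, hc⟩
  induction c using QuotientGroup.induction_on with
  | H q =>
    obtain ⟨d, hd⟩ := (mk_mem_H2fixed_iff q).1 hc
    obtain ⟨b, hb, hfix⟩ := hd.exists_eq_one_of_fixed
    let p : ZQ A M σ := ⟨((q : A → A → M), b), q.2, hb⟩
    exact ⟨⟨p, (mk_mem_ker_TrHom_iff p).2 hfix⟩, rfl⟩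

end Classes

theorem kernel_of_trace_iso_fixed_H2_general
    (E : Type) [Field E] [IsAlgClosed E]
    (A : Type) [AddCommGroup A] (σ : A ≃+ A) :
    ∃ e : (TrHom A Eˣ σ).ker ≃* H2fixed A Eˣ σ,
      ∀ (c : HQ A Eˣ σ) (hc : c ∈ (TrHom A Eˣ σ).ker),
        ((e ⟨c, hc⟩ : H2fixed A Eˣ σ) : H2 A Eˣ) = clsHom A Eˣ σ c :=
  ⟨MulEquiv.ofBijective (kerTrHomToH2fixed (M := Eˣ) (σ := σ))
      ⟨kerTrHomToH2fixed_injective, kerTrHomToH2fixed_surjective⟩,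
    fun _ _ => rfl⟩

/-- The map `[(a,b)] ↦ [a]` restricts to a group isomorphism from the
kernel of the trace-of-Frobenius homomorphism `Tr : HQ(A,σ,Eˣ) → Hom(A^σ, Eˣ)` onto
`H²(A,Eˣ)^σ`. -/
theorem kernel_of_trace_iso_fixed_H2
    (E : Type) [Field E] [IsAlgClosed E] [CharZero E]
    (A : Type) [AddCommGroup A] (σ : A ≃+ A) :
    ∃ e : (TrHom A Eˣ σ).ker ≃* H2fixed A Eˣ σ,
      ∀ (c : HQ A Eˣ σ) (hc : c ∈ (TrHom A Eˣ σ).ker),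
        ((e ⟨c, hc⟩ : H2fixed A Eˣ σ) : H2 A Eˣ) = clsHom A Eˣ σ c :=
  kernel_of_trace_iso_fixed_H2_general E A σ
end
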